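/- Let Y : [0,1] → G^m(V) be continuous and fix X, Y with p-variation controlled by a control ω (positive off the diagonal). There is c = c(‖X‖_∞, m) such that for 0 < ε < 1/(ω(0,1) ∨ 1): if max_{k=1..m} |X_{s,t}^k − Y_{s,t}^k| / ω(s,t)^{k/p} ≤ ε for all s < t, then d(X_{s,t}, Y_{s,t}) ≤ c ε^{1/m} ω(s,t)^{1/p}; and conversely if d(X_{s,t}, Y_{s,t}) ≤ ε ω(s,t)^{1/p} then max_{k=1..m} |X_{s,t}^k − Y_{s,t}^k| / ω(s,t)^{k/p} ≤ c ε. Consequently the two corresponding distances induce the same topology on path space. -/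

import Mathlib

/-!
Write `x = X_{s,t}`, `y = Y_{s,t}`, `z = x⁻¹ y` (so that `d(x, y) = ‖z‖`) and
`ρ = ω(s,t)^{1/p}`. All estimates are of the form `‖uᵏ‖ ≤ C ρᵏ` for every degree `k`, i.e.
bounds on the dilation `δ_{1/ρ} u`; they are stable under products at the cost of a factor
`m + 1`, because the algebra is truncated at level `m`. For the same reason
`x⁻¹ = ∑_{j ≤ m} (1 - x)ʲ` is a finite geometric series, so `‖x‖ ≤ ρ` bounds `x⁻¹` in this
sense. Then `1 - z = x⁻¹ (x - y)` turns componentwise bounds of order `ε` on `x - y` into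
bounds of order `ε` on the components of `z`, whence `‖z‖ ≲ ε^{1/m} ρ`; conversely
`x - y = x (1 - z)` turns `‖z‖ ≤ ε ρ` into componentwise bounds of order `ε` on `x - y`.
-/

open scoped BigOperators NNReal

/-- A control function on the simplex `{0 ≤ s ≤ t ≤ 1}`. -/
def IsControl (ω : ℝ → ℝ → ℝ) : Prop :=
  ContinuousOn (fun q : ℝ × ℝ => ω q.1 q.2) {q | 0 ≤ q.1 ∧ q.1 ≤ q.2 ∧ q.2 ≤ 1} ∧
  (∀ s t u, 0 ≤ s → s ≤ t → t ≤ u → u ≤ 1 → ω s t + ω t u ≤ ω s u) ∧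
  (∀ s t, 0 ≤ s → s ≤ t → t ≤ 1 → 0 ≤ ω s t) ∧
  (∀ t, 0 ≤ t → t ≤ 1 → ω t t = 0)

/-- The `i`-th graded component of `x`; `A` with its grading `𝒜` models the truncated
tensor algebra `T⁽ᵐ⁾(V)` (with `G^m(V) ⊂ T̃⁽ᵐ⁾(V)`). -/
noncomputable def gcomp {A : Type*} [NormedRing A] [NormedAlgebra ℝ A]
    (𝒜 : ℕ → Submodule ℝ A) [GradedAlgebra 𝒜] (x : A) (i : ℕ) : A :=
  (DirectSum.decompose 𝒜 x i : A)

/-- The homogeneous norm `‖x‖ = max_{i=1..m} (i!|xⁱ|)^{1/i}`. -/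
noncomputable def hnorm {A : Type*} [NormedRing A] [NormedAlgebra ℝ A]
    (𝒜 : ℕ → Submodule ℝ A) [GradedAlgebra 𝒜] (m : ℕ) (x : A) : ℝ :=
  (((Finset.Icc 1 m).sup fun i =>
    ((i.factorial : ℝ≥0) * ‖gcomp 𝒜 x i‖₊) ^ ((i : ℝ)⁻¹) : ℝ≥0) : ℝ)

/-- Left-invariant distance `d(g,h) = ‖g⁻¹ ⊗ h‖`. -/
noncomputable def hdist {A : Type*} [NormedRing A] [NormedAlgebra ℝ A]
    (𝒜 : ℕ → Submodule ℝ A) [GradedAlgebra 𝒜] (m : ℕ) (g h : A) : ℝ :=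
  hnorm 𝒜 m (Ring.inverse g * h)

/-- Increment `X_{s,t} = X_s⁻¹ ⊗ X_t`. -/
noncomputable def incT {A : Type*} [NormedRing A] [NormedAlgebra ℝ A]
    (X : ℝ → A) (s t : ℝ) : A := Ring.inverse (X s) * X t

open Finset
open scoped Nat

section Components

variable {A : Type*} [NormedRing A] [NormedAlgebra ℝ A] {𝒜 : ℕ → Submodule ℝ A}
  [GradedAlgebra 𝒜]

lemma gcomp_sub (x y : A) (k : ℕ) : gcomp 𝒜 (x - y) k = gcomp 𝒜 x k - gcomp 𝒜 y k := by
  simp [gcomp]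

lemma gcomp_sum {ι : Type*} (s : Finset ι) (f : ι → A) (k : ℕ) :
    gcomp 𝒜 (∑ i ∈ s, f i) k = ∑ i ∈ s, gcomp 𝒜 (f i) k := by
  simp [gcomp, DirectSum.decompose_sum]

lemma gcomp_one (k : ℕ) : gcomp 𝒜 (1 : A) k = if k = 0 then 1 else 0 := by
  split_ifs with hk
  · subst hk; exact DirectSum.decompose_of_mem_same 𝒜 (SetLike.one_mem_graded 𝒜)
  · exact DirectSum.decompose_of_mem_ne 𝒜 (SetLike.one_mem_graded 𝒜) (Ne.symm hk)

lemma norm_gcomp_one_sub (x : A) {k : ℕ} (hk : k ≠ 0) :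
    ‖gcomp 𝒜 (1 - x) k‖ = ‖gcomp 𝒜 x k‖ := by
  rw [gcomp_sub, gcomp_one, if_neg hk, zero_sub, norm_neg]

lemma gcomp_mul (x y : A) (k : ℕ) :
    gcomp 𝒜 (x * y) k = ∑ ij ∈ antidiagonal k, gcomp 𝒜 x ij.1 * gcomp 𝒜 y ij.2 := by
  simp only [gcomp, DirectSum.decompose_mul, DirectSum.coe_mul_apply_eq_sum_antidiagonal]

lemma gcomp_zero_mul (x y : A) : gcomp 𝒜 (x * y) 0 = gcomp 𝒜 x 0 * gcomp 𝒜 y 0 := by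
  simp [gcomp_mul]

lemma gcomp_pow_eq_zero_of_lt {a : A} (ha : gcomp 𝒜 a 0 = 0) :
    ∀ {j k : ℕ}, k < j → gcomp 𝒜 (a ^ j) k = 0
  | j + 1, k, hk => by
    rw [pow_succ, gcomp_mul]
    refine sum_eq_zero fun ⟨i, l⟩ hil => ?_
    rw [HasAntidiagonal.mem_antidiagonal] at hil
    dsimp only
    rcases Nat.eq_zero_or_pos l with rfl | hl
    · rw [ha, mul_zero]
    · rw [gcomp_pow_eq_zero_of_lt ha (by omega), zero_mul]

variable {m : ℕ} (htrunc : ∀ i, m < i → 𝒜 i = ⊥)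
include htrunc

lemma gcomp_eq_zero_of_lt (x : A) {k : ℕ} (hk : m < k) : gcomp 𝒜 x k = 0 := by
  have h : gcomp 𝒜 x k ∈ 𝒜 k := (DirectSum.decompose 𝒜 x k).2
  rwa [htrunc k hk, Submodule.mem_bot] at h

lemma pow_succ_eq_zero_of_gcomp_zero {a : A} (ha : gcomp 𝒜 a 0 = 0) : a ^ (m + 1) = 0 := by
  classical
  rw [← DirectSum.sum_support_decompose 𝒜 (a ^ (m + 1))]
  refine sum_eq_zero fun k _ => ?_
  rcases lt_or_ge k (m + 1) with hk | hk
  · exact gcomp_pow_eq_zero_of_lt ha hk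
  · exact gcomp_eq_zero_of_lt htrunc _ (by omega)

lemma one_sub_pow_succ_eq_zero {w : A} (hw : gcomp 𝒜 w 0 = 1) : (1 - w) ^ (m + 1) = 0 :=
  pow_succ_eq_zero_of_gcomp_zero htrunc (by simp [gcomp_sub, gcomp_one, hw])

lemma geom_sum_one_sub_mul {w : A} (hw : gcomp 𝒜 w 0 = 1) :
    (∑ j ∈ range (m + 1), (1 - w) ^ j) * w = 1 := by
  have h := geom_sum_mul (1 - w) (m + 1)
  rwa [one_sub_pow_succ_eq_zero htrunc hw, sub_sub_cancel_left, zero_sub, mul_neg, neg_inj] at h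

lemma mul_geom_sum_one_sub {w : A} (hw : gcomp 𝒜 w 0 = 1) :
    w * ∑ j ∈ range (m + 1), (1 - w) ^ j = 1 := by
  have h := mul_geom_sum (1 - w) (m + 1)
  rwa [one_sub_pow_succ_eq_zero htrunc hw, sub_sub_cancel_left, zero_sub, neg_mul, neg_inj] at h

lemma isUnit_of_gcomp_zero_eq_one {w : A} (hw : gcomp 𝒜 w 0 = 1) : IsUnit w :=
  ⟨⟨w, _, mul_geom_sum_one_sub htrunc hw, geom_sum_one_sub_mul htrunc hw⟩, rfl⟩

lemma inverse_eq_geom_sum {w : A} (hw : gcomp 𝒜 w 0 = 1) :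
    Ring.inverse w = ∑ j ∈ range (m + 1), (1 - w) ^ j :=
  Ring.inverse_unit ⟨w, _, mul_geom_sum_one_sub htrunc hw, geom_sum_one_sub_mul htrunc hw⟩

lemma gcomp_zero_inverse {w : A} (hw : gcomp 𝒜 w 0 = 1) : gcomp 𝒜 (Ring.inverse w) 0 = 1 := by
  have h := congrArg (gcomp 𝒜 · 0)
    (Ring.inverse_mul_cancel w (isUnit_of_gcomp_zero_eq_one htrunc hw))
  simpa [gcomp_zero_mul, gcomp_one, hw] using h

lemma gcomp_zero_incT {X : ℝ → A} {s t : ℝ} (hs : gcomp 𝒜 (X s) 0 = 1)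
    (ht : gcomp 𝒜 (X t) 0 = 1) : gcomp 𝒜 (incT X s t) 0 = 1 := by
  rw [incT, gcomp_zero_mul, gcomp_zero_inverse htrunc hs, ht, one_mul]

end Components

section Bounds

variable {A : Type*} [NormedRing A] [NormedAlgebra ℝ A] (𝒜 : ℕ → Submodule ℝ A)
  [GradedAlgebra 𝒜]

/-- After the dilation `δ_{1/ρ}`, every graded component of `x` has norm at most `C`. -/
def GcompBound (C ρ : ℝ) (x : A) : Prop := ∀ i, ‖gcomp 𝒜 x i‖ ≤ C * ρ ^ i

variable {𝒜} {C C' Ca Cb ρ : ℝ}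

lemma GcompBound.mono {x : A} (h : GcompBound 𝒜 C ρ x) (hρ : 0 ≤ ρ) (hC : C ≤ C') :
    GcompBound 𝒜 C' ρ x := fun i =>
  (h i).trans (by gcongr)

lemma gcompBound_one (hρ : 0 ≤ ρ) : GcompBound 𝒜 ‖(1 : A)‖ ρ 1 := by
  intro i
  rw [gcomp_one]
  split_ifs with hi
  · simp [hi]
  · rw [norm_zero]; positivity

lemma GcompBound.sub {a b : A} (ha : GcompBound 𝒜 Ca ρ a) (hb : GcompBound 𝒜 Cb ρ b) :
    GcompBound 𝒜 (Ca + Cb) ρ (a - b) := fun i => by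
  rw [gcomp_sub, add_mul]
  exact (norm_sub_le _ _).trans (add_le_add (ha i) (hb i))

lemma GcompBound.sum {ι : Type*} (s : Finset ι) {C : ι → ℝ} {a : ι → A}
    (h : ∀ j ∈ s, GcompBound 𝒜 (C j) ρ (a j)) :
    GcompBound 𝒜 (∑ j ∈ s, C j) ρ (∑ j ∈ s, a j) :=
  fun i => by
    rw [gcomp_sum, sum_mul]
    exact (norm_sum_le _ _).trans (sum_le_sum fun j hj => h j hj i)

variable {m : ℕ} (htrunc : ∀ i, m < i → 𝒜 i = ⊥)
include htrunc

/-- The product has `k + 1` terms in degree `k`, and truncation leaves only degrees `k ≤ m`. -/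
lemma GcompBound.mul {a b : A} (hρ : 0 ≤ ρ) (ha : GcompBound 𝒜 Ca ρ a)
    (hb : GcompBound 𝒜 Cb ρ b) : GcompBound 𝒜 ((m + 1) * Ca * Cb) ρ (a * b) := by
  have hCa : 0 ≤ Ca := by simpa using (norm_nonneg _).trans (ha 0)
  have hCb : 0 ≤ Cb := by simpa using (norm_nonneg _).trans (hb 0)
  intro k
  rcases lt_or_ge m k with hk | hk
  · rw [gcomp_eq_zero_of_lt htrunc _ hk, norm_zero]; positivity
  have hterm : ∀ ij ∈ antidiagonal k,
      ‖gcomp 𝒜 a ij.1 * gcomp 𝒜 b ij.2‖ ≤ Ca * Cb * ρ ^ k := fun ij hij => by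
    rw [HasAntidiagonal.mem_antidiagonal] at hij
    calc ‖gcomp 𝒜 a ij.1 * gcomp 𝒜 b ij.2‖ ≤ (Ca * ρ ^ ij.1) * (Cb * ρ ^ ij.2) :=
          (norm_mul_le _ _).trans (mul_le_mul (ha _) (hb _) (norm_nonneg _) (by positivity))
      _ = Ca * Cb * ρ ^ k := by rw [← hij, pow_add]; ring
  calc ‖gcomp 𝒜 (a * b) k‖ ≤ (k + 1) * (Ca * Cb * ρ ^ k) := by
        rw [gcomp_mul]
        refine (norm_sum_le _ _).trans ((sum_le_card_nsmul _ _ _ hterm).trans_eq ?_)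
        simp [Finset.Nat.card_antidiagonal]
    _ ≤ (m + 1) * Ca * Cb * ρ ^ k := by
        rw [mul_assoc, mul_assoc, mul_assoc]
        gcongr

lemma GcompBound.pow {a : A} (hρ : 0 ≤ ρ) (ha : GcompBound 𝒜 1 ρ a) (j : ℕ) :
    GcompBound 𝒜 ((m + 1) ^ j * ‖(1 : A)‖) ρ (a ^ j) := by
  induction j with
  | zero => simpa using gcompBound_one hρ
  | succ j ih =>
    rw [pow_succ, pow_succ]
    convert ih.mul htrunc hρ ha using 1
    ring

lemma gcompBound_inverse {w : A} (hρ : 0 ≤ ρ) (hw : gcomp 𝒜 w 0 = 1)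
    (h : GcompBound 𝒜 1 ρ (1 - w)) :
    GcompBound 𝒜 ((m + 1) ^ (m + 1) * ‖(1 : A)‖) ρ (Ring.inverse w) := by
  rw [inverse_eq_geom_sum htrunc hw]
  refine (GcompBound.sum _ fun j _ => h.pow htrunc hρ j).mono hρ ?_
  calc ∑ j ∈ range (m + 1), ((m : ℝ) + 1) ^ j * ‖(1 : A)‖
      ≤ ∑ _j ∈ range (m + 1), ((m : ℝ) + 1) ^ m * ‖(1 : A)‖ :=
        sum_le_sum fun j hj => by
          gcongr
          · linarith
          · exact Nat.lt_succ_iff.mp (mem_range.mp hj)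
    _ = ((m : ℝ) + 1) ^ (m + 1) * ‖(1 : A)‖ := by simp [pow_succ]; ring

lemma gcompBound_of_forall_mem_Icc {x : A} (hρ : 0 ≤ ρ) (hC : 0 ≤ C) (hx : gcomp 𝒜 x 0 = 0)
    (h : ∀ k ∈ Icc 1 m, ‖gcomp 𝒜 x k‖ ≤ C * ρ ^ k) : GcompBound 𝒜 C ρ x := by
  intro k
  rcases Nat.eq_zero_or_pos k with rfl | hk0
  · simp [hx, hC]
  rcases lt_or_ge m k with hk | hk
  · rw [gcomp_eq_zero_of_lt htrunc _ hk, norm_zero]; positivity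
  · exact h k (mem_Icc.mpr ⟨hk0, hk⟩)

end Bounds

section HomogeneousNorm

variable {A : Type*} [NormedRing A] [NormedAlgebra ℝ A] {𝒜 : ℕ → Submodule ℝ A}
  [GradedAlgebra 𝒜]
  {m : ℕ} {x : A} {ρ : ℝ}

lemma hnorm_nonneg : 0 ≤ hnorm 𝒜 m x := NNReal.coe_nonneg _

lemma hnorm_le_iff {C : ℝ} (hC : 0 ≤ C) :
    hnorm 𝒜 m x ≤ C ↔ ∀ k ∈ Icc 1 m, (k ! : ℝ) * ‖gcomp 𝒜 x k‖ ≤ C ^ k := by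
  lift C to ℝ≥0 using hC
  rw [hnorm, NNReal.coe_le_coe, Finset.sup_le_iff]
  refine forall₂_congr fun k hk => ?_
  have hk0 : (0 : ℝ) < k := by exact_mod_cast (mem_Icc.mp hk).1
  rw [NNReal.rpow_inv_le_iff hk0, NNReal.rpow_natCast, ← NNReal.coe_le_coe]
  push_cast
  rfl

lemma norm_gcomp_le_of_hnorm_le (h : hnorm 𝒜 m x ≤ ρ) {k : ℕ} (hk : k ∈ Icc 1 m) :
    ‖gcomp 𝒜 x k‖ ≤ ρ ^ k :=
  calc ‖gcomp 𝒜 x k‖ ≤ (k ! : ℝ) * ‖gcomp 𝒜 x k‖ :=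
        le_mul_of_one_le_left (norm_nonneg _) (by exact_mod_cast k.factorial_pos)
    _ ≤ ρ ^ k := (hnorm_le_iff (hnorm_nonneg.trans h)).mp h k hk

lemma gcompBound_one_sub_of_hnorm_le_mul (htrunc : ∀ i, m < i → 𝒜 i = ⊥)
    (hx : gcomp 𝒜 x 0 = 1) {ε : ℝ} (hε₀ : 0 ≤ ε) (hε₁ : ε ≤ 1) (hρ : 0 ≤ ρ)
    (h : hnorm 𝒜 m x ≤ ε * ρ) :
    GcompBound 𝒜 ε ρ (1 - x) := by
  refine gcompBound_of_forall_mem_Icc htrunc hρ hε₀ (by simp [gcomp_sub, gcomp_one, hx])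
    fun k hk => ?_
  have hk1 : 1 ≤ k := (mem_Icc.mp hk).1
  calc ‖gcomp 𝒜 (1 - x) k‖ = ‖gcomp 𝒜 x k‖ := norm_gcomp_one_sub x (by omega)
    _ ≤ (ε * ρ) ^ k := norm_gcomp_le_of_hnorm_le h hk
    _ ≤ ε * ρ ^ k := by
        rw [mul_pow]
        gcongr
        exact pow_le_of_le_one hε₀ hε₁ (by omega)

lemma gcompBound_one_sub_of_hnorm_le (htrunc : ∀ i, m < i → 𝒜 i = ⊥) (hx : gcomp 𝒜 x 0 = 1)
    (hρ : 0 ≤ ρ) (h : hnorm 𝒜 m x ≤ ρ) :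
    GcompBound 𝒜 1 ρ (1 - x) :=
  gcompBound_one_sub_of_hnorm_le_mul htrunc hx zero_le_one le_rfl hρ (by rwa [one_mul])

/-- The exponent `1/m` is lost here: a bound of order `ε` on the component of degree `k` only
gives `ε^{1/k} ≥ ε^{1/m}` for the homogeneous norm. -/
lemma hnorm_le_of_gcompBound_one_sub {K δ : ℝ} (hK : 1 ≤ K) (hδ₀ : 0 ≤ δ) (hδ₁ : δ ≤ 1)
    (hρ : 0 ≤ ρ) (h : GcompBound 𝒜 (K * δ ^ m) ρ (1 - x)) :
    hnorm 𝒜 m x ≤ m ! * K * δ * ρ := by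
  have hmK : 1 ≤ (m ! : ℝ) * K :=
    one_le_mul_of_one_le_of_one_le (by exact_mod_cast m.factorial_pos) hK
  rw [hnorm_le_iff (by positivity)]
  intro k hk
  obtain ⟨hk1, hkm⟩ := mem_Icc.mp hk
  calc (k ! : ℝ) * ‖gcomp 𝒜 x k‖ = k ! * ‖gcomp 𝒜 (1 - x) k‖ := by
        rw [norm_gcomp_one_sub x (by omega)]
    _ ≤ (m ! * K) * δ ^ k * ρ ^ k := by
        rw [mul_assoc, mul_assoc]
        gcongr
        refine (h k).trans ?_
        rw [mul_assoc]
        have := pow_le_pow_of_le_one hδ₀ hδ₁ hkm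
        gcongr
    _ ≤ (m ! * K) ^ k * δ ^ k * ρ ^ k := by
        gcongr
        exact le_self_pow₀ hmK (by omega)
    _ = (m ! * K * δ * ρ) ^ k := by ring

end HomogeneousNorm

section Comparison

variable {A : Type*} [NormedRing A] [NormedAlgebra ℝ A] {𝒜 : ℕ → Submodule ℝ A}
  [GradedAlgebra 𝒜]
  {m : ℕ} (htrunc : ∀ i, m < i → 𝒜 i = ⊥) {x y : A} {ρ ε : ℝ}
include htrunc

theorem hdist_le_of_norm_gcomp_sub_le (hm : m ≠ 0) (hx₀ : gcomp 𝒜 x 0 = 1)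
    (hy₀ : gcomp 𝒜 y 0 = 1) (hρ : 0 ≤ ρ) (hx : hnorm 𝒜 m x ≤ ρ) (hε₀ : 0 ≤ ε) (hε₁ : ε ≤ 1)
    (h : ∀ k ∈ Icc 1 m, ‖gcomp 𝒜 x k - gcomp 𝒜 y k‖ ≤ ε * ρ ^ k) :
    hdist 𝒜 m x y ≤
      m ! * max ((m + 1) * ((m + 1) ^ (m + 1) * ‖(1 : A)‖)) 1 * ε ^ (m : ℝ)⁻¹ * ρ := by
  have hinv :=
    gcompBound_inverse htrunc hρ hx₀ (gcompBound_one_sub_of_hnorm_le htrunc hx₀ hρ hx)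
  have hdiff : GcompBound 𝒜 ε ρ (x - y) :=
    gcompBound_of_forall_mem_Icc htrunc hρ hε₀ (by simp [gcomp_sub, hx₀, hy₀])
      fun k hk => by rw [gcomp_sub]; exact h k hk
  have hone_sub : 1 - Ring.inverse x * y = Ring.inverse x * (x - y) := by
    rw [mul_sub, Ring.inverse_mul_cancel x (isUnit_of_gcomp_zero_eq_one htrunc hx₀)]
  refine hnorm_le_of_gcompBound_one_sub (le_max_right _ _) (by positivity)
    (Real.rpow_le_one hε₀ hε₁ (by positivity)) hρ ?_
  rw [Real.rpow_inv_natCast_pow hε₀ hm, hone_sub]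
  exact (hinv.mul htrunc hρ hdiff).mono hρ (by gcongr; exact le_max_left _ _)

theorem norm_gcomp_sub_le_of_hdist_le (hx₀ : gcomp 𝒜 x 0 = 1) (hy₀ : gcomp 𝒜 y 0 = 1)
    (hρ : 0 ≤ ρ) (hx : hnorm 𝒜 m x ≤ ρ) (hε₀ : 0 ≤ ε) (hε₁ : ε ≤ 1)
    (h : hdist 𝒜 m x y ≤ ε * ρ) (k : ℕ) :
    ‖gcomp 𝒜 x k - gcomp 𝒜 y k‖ ≤ (m + 1) * (‖(1 : A)‖ + 1) * ε * ρ ^ k := by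
  have hz₀ : gcomp 𝒜 (Ring.inverse x * y) 0 = 1 := by
    rw [gcomp_zero_mul, gcomp_zero_inverse htrunc hx₀, hy₀, one_mul]
  have hxb : GcompBound 𝒜 (‖(1 : A)‖ + 1) ρ x := by
    simpa using (gcompBound_one hρ).sub (gcompBound_one_sub_of_hnorm_le htrunc hx₀ hρ hx)
  have hzb := gcompBound_one_sub_of_hnorm_le_mul htrunc hz₀ hε₀ hε₁ hρ h
  have hsub : x - y = x * (1 - Ring.inverse x * y) := by
    rw [mul_sub, mul_one, ← mul_assoc,
      Ring.mul_inverse_cancel x (isUnit_of_gcomp_zero_eq_one htrunc hx₀), one_mul]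
  rw [← gcomp_sub, hsub]
  exact hxb.mul htrunc hρ hzb k

end Comparison

theorem component_vs_homogeneous_distance_general {A : Type*} [NormedRing A] [NormedAlgebra ℝ A]
    (𝒜 : ℕ → Submodule ℝ A) [GradedAlgebra 𝒜] (m : ℕ) (hm : 1 ≤ m)
    (htrunc : ∀ i, m < i → 𝒜 i = ⊥)
    (p : ℝ) (hp : 1 ≤ p)
    (ω : ℝ → ℝ → ℝ)
    (X Y : ℝ → A)
    (hX0 : ∀ t ∈ Set.Icc (0:ℝ) 1, gcomp 𝒜 (X t) 0 = 1)
    (hY0 : ∀ t ∈ Set.Icc (0:ℝ) 1, gcomp 𝒜 (Y t) 0 = 1)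
    (hXvar : ∀ s t : ℝ, 0 ≤ s → s ≤ t → t ≤ 1 → hnorm 𝒜 m (incT X s t) ^ p ≤ ω s t) :
    ∃ c > (0:ℝ), ∀ ε : ℝ, 0 < ε → ε < 1 / max (ω 0 1) 1 →
      ∀ s t : ℝ, 0 ≤ s → s < t → t ≤ 1 →
        ((∀ k ∈ Finset.Icc 1 m,
            ‖gcomp 𝒜 (incT X s t) k - gcomp 𝒜 (incT Y s t) k‖ ≤
              ε * ω s t ^ ((k : ℝ) / p)) →
          hdist 𝒜 m (incT X s t) (incT Y s t) ≤
            c * ε ^ ((m : ℝ)⁻¹) * ω s t ^ (1 / p)) ∧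
        ((hdist 𝒜 m (incT X s t) (incT Y s t) ≤ ε * ω s t ^ (1 / p)) →
          ∀ k ∈ Finset.Icc 1 m,
            ‖gcomp 𝒜 (incT X s t) k - gcomp 𝒜 (incT Y s t) k‖ ≤
              c * ε * ω s t ^ ((k : ℝ) / p)) := by
  set c₁ : ℝ := m ! * max ((m + 1) * ((m + 1) ^ (m + 1) * ‖(1 : A)‖)) 1
  set c₂ : ℝ := (m + 1) * (‖(1 : A)‖ + 1)
  refine ⟨max c₁ c₂, lt_max_of_lt_right (by positivity), fun ε hε hεlt s t hs hst ht => ?_⟩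
  have hε₁ : ε ≤ 1 := hεlt.le.trans (div_le_one_of_le₀ (le_max_right _ _) (by positivity))
  have hx₀ := gcomp_zero_incT htrunc (hX0 s ⟨hs, by linarith⟩) (hX0 t ⟨by linarith, ht⟩)
  have hy₀ := gcomp_zero_incT htrunc (hY0 s ⟨hs, by linarith⟩) (hY0 t ⟨by linarith, ht⟩)
  have hvar := hXvar s t hs hst.le ht
  have hω : 0 ≤ ω s t := (Real.rpow_nonneg hnorm_nonneg p).trans hvar
  have hx : hnorm 𝒜 m (incT X s t) ≤ ω s t ^ (1 / p) := by
    rw [one_div]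
    exact (Real.le_rpow_inv_iff_of_pos hnorm_nonneg hω (by linarith)).mpr hvar
  have hpow (k : ℕ) : ω s t ^ ((k : ℝ) / p) = (ω s t ^ (1 / p)) ^ k := by
    rw [← Real.rpow_mul_natCast hω, one_div_mul_eq_div]
  simp only [hpow]
  refine ⟨fun h => ?_, fun h k _ => ?_⟩
  · refine (hdist_le_of_norm_gcomp_sub_le htrunc (by omega) hx₀ hy₀ (by positivity) hx hε.le hε₁
      h).trans ?_
    gcongr
    exact le_max_left _ _
  · refine (norm_gcomp_sub_le_of_hdist_le htrunc hx₀ hy₀ (by positivity) hx hε.le hε₁ h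
      k).trans ?_
    gcongr
    exact le_max_right _ _

/-- Comparison of the component-wise distance and the homogeneous-norm distance, for
paths `X, Y` with `p`-variation controlled by `ω`: there is `c = c(‖X‖_∞, m)` such
that for `0 < ε < 1/(ω(0,1) ∨ 1)` and all `s < t` in `[0,1]`:
if `|X_{s,t}^k − Y_{s,t}^k| ≤ ε ω(s,t)^{k/p}` for `k = 1,…,m` then
`d(X_{s,t}, Y_{s,t}) ≤ c ε^{1/m} ω(s,t)^{1/p}`; and if
`d(X_{s,t}, Y_{s,t}) ≤ ε ω(s,t)^{1/p}` then
`|X_{s,t}^k − Y_{s,t}^k| ≤ c ε ω(s,t)^{k/p}` for `k = 1,…,m`.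
(Consequently the two induced distances give the same topology on path space.) -/
theorem component_vs_homogeneous_distance {A : Type*} [NormedRing A] [NormedAlgebra ℝ A]
    (𝒜 : ℕ → Submodule ℝ A) [GradedAlgebra 𝒜] (m : ℕ) (hm : 1 ≤ m)
    (htrunc : ∀ i, m < i → 𝒜 i = ⊥)
    (p : ℝ) (hp : 1 ≤ p)
    (ω : ℝ → ℝ → ℝ) (hω : IsControl ω)
    (hωpos : ∀ s t : ℝ, 0 ≤ s → s < t → t ≤ 1 → 0 < ω s t)
    (X Y : ℝ → A)
    (hX0 : ∀ t ∈ Set.Icc (0:ℝ) 1, gcomp 𝒜 (X t) 0 = 1)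
    (hY0 : ∀ t ∈ Set.Icc (0:ℝ) 1, gcomp 𝒜 (Y t) 0 = 1)
    (hXvar : ∀ s t : ℝ, 0 ≤ s → s ≤ t → t ≤ 1 → hnorm 𝒜 m (incT X s t) ^ p ≤ ω s t)
    (hYvar : ∀ s t : ℝ, 0 ≤ s → s ≤ t → t ≤ 1 → hnorm 𝒜 m (incT Y s t) ^ p ≤ ω s t) :
    ∃ c > (0:ℝ), ∀ ε : ℝ, 0 < ε → ε < 1 / max (ω 0 1) 1 →
      ∀ s t : ℝ, 0 ≤ s → s < t → t ≤ 1 →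
        ((∀ k ∈ Finset.Icc 1 m,
            ‖gcomp 𝒜 (incT X s t) k - gcomp 𝒜 (incT Y s t) k‖ ≤
              ε * ω s t ^ ((k : ℝ) / p)) →
          hdist 𝒜 m (incT X s t) (incT Y s t) ≤
            c * ε ^ ((m : ℝ)⁻¹) * ω s t ^ (1 / p)) ∧
        ((hdist 𝒜 m (incT X s t) (incT Y s t) ≤ ε * ω s t ^ (1 / p)) →
          ∀ k ∈ Finset.Icc 1 m,
            ‖gcomp 𝒜 (incT X s t) k - gcomp 𝒜 (incT Y s t) k‖ ≤
              c * ε * ω s t ^ ((k : ℝ) / p)) :=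
  component_vs_homogeneous_distance_general 𝒜 m hm htrunc p hp ω X Y hX0 hY0 hXvar
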